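/- Let λ₁, λ₂ ∈ ℂ∖{0}, b₁ ∈ ℂ∖{0, 1/2}, and b₂ ∈ ℂ. There is no ℂ-linear bijection ψ : Q × Q → Q × Q with ψ(Q×{0}) = {0}×Q and ψ({0}×Q) = Q×{0} such that ψ ∘ L_m^{(λ₁,b₁)} = L_m^{(λ₂,b₂)} ∘ ψ and ψ ∘ G_m^{(λ₁,b₁)} = G_m^{(λ₂,b₂)} ∘ ψ for all m ∈ ℤ; i.e., Ω_ℛ(λ₁,b₁) is not isomorphic to the parity-change of Ω_ℛ(λ₂,b₂). (Here superscripts indicate the operators of Ω_ℛ(λ₁,b₁) and Ω_ℛ(λ₂,b₂).) -/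
import Mathlib


/- STATEMENT 19: For λ₁, λ₂ ≠ 0, b₁ ∉ {0, 1/2} and b₂ ∈ ℂ, there is no parity-swapping
ℂ-linear bijection ψ of Q × Q intertwining the operators of Ω_ℛ(λ₁,b₁) with those of
Ω_ℛ(λ₂,b₂); i.e. Ω_ℛ(λ₁,b₁) is not isomorphic to the parity-change of Ω_ℛ(λ₂,b₂). -/

open Polynomial

noncomputable section

abbrev Qp := Polynomial ℂ

/-- `L_m(p,q) = (λ^m(x+m(b−1))·p(x−m), λ^m(x+m(b−1/2))·q(x−m))` -/
def OL (lam b : ℂ) (m : ℤ) : Qp × Qp → Qp × Qp :=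
  fun w => (lam ^ m • ((X + C ((m : ℂ) * (b - 1))) * w.1.comp (X - C (m : ℂ))),
            lam ^ m • ((X + C ((m : ℂ) * (b - 1 / 2))) * w.2.comp (X - C (m : ℂ))))

/-- `G_m(p,q) = (−λ^m·q(x−m), λ^m(x+m(2b−1))·p(x−m))` -/
def OG (lam b : ℂ) (m : ℤ) : Qp × Qp → Qp × Qp :=
  fun w => (-(lam ^ m • w.2.comp (X - C (m : ℂ))),
            lam ^ m • ((X + C ((m : ℂ) * (2 * b - 1))) * w.1.comp (X - C (m : ℂ))))

theorem stmt19 (lam₁ lam₂ : ℂ) (h₁ : lam₁ ≠ 0) (h₂ : lam₂ ≠ 0)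
    (b₁ : ℂ) (hb₁ : b₁ ≠ 0) (hb₁' : b₁ ≠ 1 / 2) (b₂ : ℂ) :
    ¬ ∃ ψ : (Qp × Qp) ≃ₗ[ℂ] (Qp × Qp),
        ⇑ψ '' {w : Qp × Qp | w.2 = 0} = {w : Qp × Qp | w.1 = 0} ∧
        ⇑ψ '' {w : Qp × Qp | w.1 = 0} = {w : Qp × Qp | w.2 = 0} ∧
        (∀ m : ℤ, ∀ w : Qp × Qp, ψ (OL lam₁ b₁ m w) = OL lam₂ b₂ m (ψ w)) ∧
        (∀ m : ℤ, ∀ w : Qp × Qp, ψ (OG lam₁ b₁ m w) = OG lam₂ b₂ m (ψ w)) := by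
  rintro ⟨ψ, hA, hB, hL, hG⟩
  have h1 : ((0:Qp), (1:Qp)) ∈ (⇑ψ '' {w : Qp × Qp | w.2 = 0}) := by
    rw [hA]; simp
  obtain ⟨⟨p, z⟩, hz, hp⟩ := h1
  simp only [Set.mem_setOf_eq] at hz
  subst hz
  have h2 : ψ (0, p) ∈ {w : Qp × Qp | w.2 = 0} := by
    rw [← hB]; exact ⟨(0, p), rfl, rfl⟩
  simp only [Set.mem_setOf_eq] at h2
  have key := hG 0 (0, p)
  have e1 : OG lam₁ b₁ 0 ((0:Qp), p) = (-p, 0) := by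
    simp [OG]
  rw [e1] at key
  have e2 : ψ (-p, 0) = (0, -1) := by
    have : ((-p : Qp), (0:Qp)) = -(p, (0:Qp)) := by simp
    rw [this, map_neg, hp]
    simp
  rw [e2] at key
  have e3 : ((0:Qp), (-1:Qp)).2 = (OG lam₂ b₂ 0 (ψ (0, p))).2 := by rw [key]
  simp only [OG, h2] at e3
  simp at e3
  have := congrArg (fun q => Polynomial.eval 0 q) e3
  simp at this

end
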